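/- arXiv:2203.05857 — 6 statements merged into one kernel-verified Lean document; each statement's English description precedes it below -/
import Mathlib

section
/- Let N be a positive natural number, let M be an N×N matrix over the bicomplex numbers 𝔹ℂ, and let Q be the 2N×2N block matrix Q = [[0, M̄],[M, 0]]. Then every coefficient of the characteristic polynomial of Q lies in the subalgebra ℂ(j) of 𝔹ℂ. -/
open scoped TensorProduct

/-- The bicomplex numbers `𝔹ℂ = ℂ ⊗[ℝ] ℂ`, a commutative ℝ-algebra. -/
abbrev BC : Type := ℂ ⊗[ℝ] ℂ

/-- The first imaginary unit `i` of the bicomplex numbers. -/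
noncomputable def BC.i : BC := Complex.I ⊗ₜ[ℝ] (1 : ℂ)

/-- The second imaginary unit `j` of the bicomplex numbers. -/
noncomputable def BC.j : BC := (1 : ℂ) ⊗ₜ[ℝ] Complex.I

/-- Bar-conjugation `z₁ + j z₂ ↦ z̄₁ + j z̄₂` (complex conjugation in `i`),
a ring (indeed ℝ-algebra) homomorphism of `𝔹ℂ`. -/
noncomputable def BC.bar : BC →ₐ[ℝ] BC :=
  Algebra.TensorProduct.map Complex.conjAe.toAlgHom (AlgHom.id ℝ ℂ)

/-- The subalgebra `ℂ(j) = {x₁ + j x₂ : x₁, x₂ ∈ ℝ}` of `𝔹ℂ`,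
realized as the range of the canonical map `ℂ → ℂ ⊗[ℝ] ℂ`, `z ↦ 1 ⊗ z`. -/
noncomputable def BC.Cj : Subalgebra ℝ BC :=
  (Algebra.TensorProduct.includeRight : ℂ →ₐ[ℝ] BC).range

/-- `Re^i(b) = (b + b̄)/2`. -/
noncomputable def BC.ReI (b : BC) : BC := (2 : ℝ)⁻¹ • (b + BC.bar b)

/-- `Im^i(b) = (b - b̄)/(2i)`; since `(2i)⁻¹ = -i/2`, this equals `((b̄ - b) * i)/2`. -/
noncomputable def BC.ImI (b : BC) : BC := (2 : ℝ)⁻¹ • ((BC.bar b - b) * BC.i)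


open scoped TensorProduct in
private lemma BC.bar_bar (b : ℂ ⊗[ℝ] ℂ) :
    (Algebra.TensorProduct.map Complex.conjAe.toAlgHom (AlgHom.id ℝ ℂ))
      ((Algebra.TensorProduct.map Complex.conjAe.toAlgHom (AlgHom.id ℝ ℂ)) b) = b := by
  induction b using TensorProduct.induction_on with
  | zero => simp
  | tmul a c => simp
  | add x y hx hy => rw [map_add, map_add, hx, hy]

open scoped TensorProduct in
private lemma BC.exists_repr (b : ℂ ⊗[ℝ] ℂ) :
    ∃ z₁ z₂ : ℂ, b = (1 : ℂ) ⊗ₜ[ℝ] z₁ + Complex.I ⊗ₜ[ℝ] z₂ := by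
  induction b using TensorProduct.induction_on with
  | zero => exact ⟨0, 0, by simp⟩
  | tmul a c =>
    refine ⟨a.re • c, a.im • c, ?_⟩
    rw [← TensorProduct.smul_tmul, ← TensorProduct.smul_tmul, ← TensorProduct.add_tmul]
    congr 1
    simp [Complex.ext_iff]
  | add x y hx hy =>
    obtain ⟨z₁, z₂, rfl⟩ := hx
    obtain ⟨w₁, w₂, rfl⟩ := hy
    exact ⟨z₁ + w₁, z₂ + w₂, by rw [TensorProduct.tmul_add, TensorProduct.tmul_add]; ring⟩

private lemma BC.mem_Cj_of_bar_fixed (b : BC) (h : BC.bar b = b) : b ∈ BC.Cj := by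
  obtain ⟨z₁, z₂, rfl⟩ := BC.exists_repr b
  have hbar : BC.bar ((1 : ℂ) ⊗ₜ[ℝ] z₁ + Complex.I ⊗ₜ[ℝ] z₂)
      = (1 : ℂ) ⊗ₜ[ℝ] z₁ - Complex.I ⊗ₜ[ℝ] z₂ := by
    simp only [BC.bar, map_add, Algebra.TensorProduct.map_tmul]
    simp [TensorProduct.neg_tmul, sub_eq_add_neg]
  rw [hbar] at h
  have h2 : (2 : ℝ) • (Complex.I ⊗ₜ[ℝ] z₂) = 0 := by
    have := sub_eq_zero.mpr h
    rw [two_smul]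
    linear_combination (norm := abel) -this
  have h0 : Complex.I ⊗ₜ[ℝ] z₂ = (0 : BC) := by
    rcases smul_eq_zero.mp h2 with h | h
    · norm_num at h
    · exact h
  rw [h0, add_zero]
  exact ⟨z₁, rfl⟩

set_option maxHeartbeats 1000000 in
/-- For `Q = [[0, M̄],[M, 0]]`, every coefficient of the
characteristic polynomial of `Q` lies in the subalgebra `ℂ(j)` of `𝔹ℂ`. -/
theorem charpoly_coeff_mem_Cj (N : ℕ) (hN : 0 < N) (M : Matrix (Fin N) (Fin N) BC)
    (Q : Matrix (Fin N ⊕ Fin N) (Fin N ⊕ Fin N) BC)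
    (hQ : Q = Matrix.fromBlocks 0 (M.map BC.bar) M 0) :
    ∀ k : ℕ, Q.charpoly.coeff k ∈ BC.Cj := by
  intro k
  have hinv : ∀ b : BC, BC.bar (BC.bar b) = b := BC.bar_bar
  have hmap : Q.map ⇑BC.bar
      = (Matrix.fromBlocks 0 (M.map ⇑BC.bar) M 0).submatrix Sum.swap Sum.swap := by
    rw [Matrix.fromBlocks_submatrix_sum_swap_sum_swap, hQ]
    ext i j
    rcases i with i | i <;> rcases j with j | j <;>
      simp [Matrix.fromBlocks, Matrix.map_apply, hinv]
  have hchar : (Q.map ⇑BC.bar).charpoly = Q.charpoly := by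
    rw [hmap, ← hQ]
    set e := Equiv.sumComm (Fin N) (Fin N) with he
    have key : Matrix.reindex e e (Q.submatrix Sum.swap Sum.swap) = Q := by
      ext i j
      rcases i with i | i <;> rcases j with j | j <;>
        simp [he, Matrix.reindex_apply, Matrix.submatrix_apply]
    rw [← Matrix.charpoly_reindex e (Q.submatrix Sum.swap Sum.swap), key]
  have hfix : BC.bar (Q.charpoly.coeff k) = Q.charpoly.coeff k := by
    have := Matrix.charpoly_map Q (BC.bar.toRingHom : BC →+* BC)
    have hc := congrArg (fun p => Polynomial.coeff p k) this
    simpa [Polynomial.coeff_map, hchar] using hc.symm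
  exact BC.mem_Cj_of_bar_fixed _ hfix
end

section
/- Let N be a positive natural number and M an N×N matrix over the bicomplex numbers 𝔹ℂ. Let Q = [[0, M̄],[M, 0]] and R = [[Re^i(M), −Im^i(M)],[−Im^i(M), −Re^i(M)]] be 2N×2N block matrices over 𝔹ℂ. Then the characteristic polynomials of Q and R are equal; in particular, for every λ ∈ ℂ(j), det(R − λ·I) = 0 if and only if det(Q − λ·I) = 0, and λ is a root of the characteristic polynomial of R with the same multiplicity as of the characteristic polynomial of Q. -/
open scoped TensorProduct

section Aux

open Polynomial

lemma BC.i_mul_i : BC.i * BC.i = -1 := by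
  unfold BC.i
  rw [Algebra.TensorProduct.tmul_mul_tmul, Complex.I_mul_I, one_mul]
  rw [show ((-1 : ℂ) ⊗ₜ[ℝ] (1 : ℂ) : BC) = -((1:ℂ) ⊗ₜ[ℝ] (1:ℂ)) from TensorProduct.neg_tmul _ _,
    ← Algebra.TensorProduct.one_def]

lemma BC.half_mul_two : ((2 : ℝ)⁻¹ • (1 : BC)) * 2 = 1 := by
  rw [smul_mul_assoc, one_mul, show ((2 : BC)) = (2:ℝ) • (1:BC) by
    rw [← Algebra.algebraMap_eq_smul_one, map_ofNat]]
  rw [smul_smul]; norm_num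

lemma BC.ReI_eq (b : BC) : BC.ReI b = ((2 : ℝ)⁻¹ • (1 : BC)) * (b + BC.bar b) := by
  rw [BC.ReI, smul_mul_assoc, one_mul]

lemma BC.ImI_eq (b : BC) : BC.ImI b = ((2 : ℝ)⁻¹ • (1 : BC)) * ((BC.bar b - b) * BC.i) := by
  rw [BC.ImI, smul_mul_assoc, one_mul]

lemma BC.key1 (b : BC) : BC.i * BC.ReI b - BC.ImI b = BC.i * b := by
  rw [BC.ReI_eq, BC.ImI_eq]
  linear_combination (BC.i * b) * BC.half_mul_two

lemma BC.key2 (b : BC) : BC.i * BC.ReI b + BC.ImI b = BC.i * BC.bar b := by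
  rw [BC.ReI_eq, BC.ImI_eq]
  linear_combination (BC.i * BC.bar b) * BC.half_mul_two

lemma BC.key3 (b : BC) : BC.i * BC.ImI b + BC.ReI b = b := by
  rw [BC.ReI_eq, BC.ImI_eq]
  linear_combination b * BC.half_mul_two +
    ((2:ℝ)⁻¹ • (1:BC)) * (BC.bar b - b) * BC.i_mul_i

lemma BC.key4 (b : BC) : BC.ReI b - BC.i * BC.ImI b = BC.bar b := by
  rw [BC.ReI_eq, BC.ImI_eq]
  linear_combination BC.bar b * BC.half_mul_two -
    ((2:ℝ)⁻¹ • (1:BC)) * (BC.bar b - b) * BC.i_mul_i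

/-- Similar matrices (over a commutative ring) have equal determinants. -/
lemma det_eq_of_similar {R : Type*} [CommRing R] {n : Type*} [Fintype n] [DecidableEq n]
    {A B P : Matrix n n R} (h : A * P = P * B) (hP : IsUnit P.det) :
    A.det = B.det := by
  have := congrArg Matrix.det h
  rw [Matrix.det_mul, Matrix.det_mul, mul_comm P.det] at this
  exact hP.mul_right_cancel this

/-- Similar matrices (over a commutative ring) have equal characteristic polynomials. -/
lemma charpoly_eq_of_similar {R : Type*} [CommRing R] {n : Type*} [Fintype n] [DecidableEq n]
    {A B P : Matrix n n R} (h : A * P = P * B) (hP : IsUnit P.det) :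
    A.charpoly = B.charpoly := by
  have hmap : (A.map (Polynomial.C : R → R[X])) * (P.map Polynomial.C)
      = (P.map Polynomial.C) * (B.map Polynomial.C) := by
    have := congrArg (Matrix.map · (Polynomial.C : R →+* R[X])) h
    simpa [Matrix.map_mul] using this
  have hsc : (Matrix.scalar n (X : R[X])) * (P.map Polynomial.C)
      = (P.map Polynomial.C) * Matrix.scalar n (X : R[X]) :=
    (Matrix.scalar_commute (X : R[X]) (fun r => mul_comm _ r) _)
  have hc : A.charmatrix * (P.map Polynomial.C) = (P.map Polynomial.C) * B.charmatrix := by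
    simp only [Matrix.charmatrix, RingHom.mapMatrix_apply, sub_mul, mul_sub, hmap, hsc]
  have hdet : IsUnit (P.map (Polynomial.C : R → R[X])).det := by
    rw [← RingHom.mapMatrix_apply (Polynomial.C : R →+* R[X]), ← RingHom.map_det]
    exact hP.map _
  exact det_eq_of_similar hc hdet

end Aux

set_option maxHeartbeats 1000000 in
set_option synthInstance.maxHeartbeats 1000000 in
/-- For `Q = [[0, M̄],[M, 0]]` and
`R = [[Re^i(M), −Im^i(M)],[−Im^i(M), −Re^i(M)]]`, the characteristic polynomials of
`Q` and `R` coincide; in particular, for every `λ ∈ ℂ(j)`, `det(R − λI) = 0` iff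
`det(Q − λI) = 0`, and `λ` is a root of the characteristic polynomial of `R` with the
same multiplicity as of that of `Q`. -/
theorem charpoly_R_eq_charpoly_Q (N : ℕ) (hN : 0 < N) (M : Matrix (Fin N) (Fin N) BC)
    (Q R : Matrix (Fin N ⊕ Fin N) (Fin N ⊕ Fin N) BC)
    (hQ : Q = Matrix.fromBlocks 0 (M.map BC.bar) M 0)
    (hR : R = Matrix.fromBlocks (M.map BC.ReI) (-(M.map BC.ImI))
      (-(M.map BC.ImI)) (-(M.map BC.ReI))) :
    R.charpoly = Q.charpoly ∧
    (∀ lam ∈ BC.Cj, (R - lam • 1).det = 0 ↔ (Q - lam • 1).det = 0) ∧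
    (∀ lam ∈ BC.Cj,
      R.charpoly.rootMultiplicity lam = Q.charpoly.rootMultiplicity lam) := by
  set S : BC →+* Matrix (Fin N) (Fin N) BC := Matrix.scalar (Fin N) with hS
  set h : BC := (2 : ℝ)⁻¹ • (1 : BC) with hh
  have h2 : h + h = 1 := by
    have hht := BC.half_mul_two
    rw [← hh] at hht
    linear_combination hht
  set P : Matrix (Fin N ⊕ Fin N) (Fin N ⊕ Fin N) BC :=
    Matrix.fromBlocks (S BC.i) (S BC.i) (S 1) (S (-1)) with hP
  have hdet : IsUnit P.det := by
    apply Matrix.isUnit_det_of_left_inverse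
      (B := Matrix.fromBlocks (S (-(h * BC.i))) (S h) (S (-(h * BC.i))) (S (-h)))
    have m11 : S (-(h * BC.i)) * S BC.i + S h * S 1 = 1 := by
      rw [← map_mul, ← map_mul, ← map_add, show -(h * BC.i) * BC.i + h * 1 = 1 by
        linear_combination (-h) * BC.i_mul_i + h2, map_one]
    have m12 : S (-(h * BC.i)) * S BC.i + S h * S (-1) = 0 := by
      rw [← map_mul, ← map_mul, ← map_add, show -(h * BC.i) * BC.i + h * (-1) = 0 by
        linear_combination (-h) * BC.i_mul_i, map_zero]
    have m21 : S (-(h * BC.i)) * S BC.i + S (-h) * S 1 = 0 := by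
      rw [← map_mul, ← map_mul, ← map_add, show -(h * BC.i) * BC.i + (-h) * 1 = 0 by
        linear_combination (-h) * BC.i_mul_i, map_zero]
    have m22 : S (-(h * BC.i)) * S BC.i + S (-h) * S (-1) = 1 := by
      rw [← map_mul, ← map_mul, ← map_add, show -(h * BC.i) * BC.i + (-h) * (-1) = 1 by
        linear_combination (-h) * BC.i_mul_i + h2, map_one]
    rw [hP, Matrix.fromBlocks_multiply, m11, m12, m21, m22, Matrix.fromBlocks_one]
  have hRP : R * P = P * Q := by
    rw [hQ, hR, hP, Matrix.fromBlocks_multiply, Matrix.fromBlocks_multiply,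
      Matrix.fromBlocks_inj]
    refine ⟨?_, ?_, ?_, ?_⟩ <;> ext a b <;>
      simp only [hS, Matrix.scalar_apply, Matrix.add_apply, Matrix.neg_apply,
        Matrix.mul_diagonal, Matrix.diagonal_mul, Matrix.map_apply, Matrix.mul_zero,
        Matrix.zero_mul, Matrix.zero_apply, add_zero, zero_add, mul_one, mul_neg, neg_mul,
        one_mul, neg_neg]
    · linear_combination BC.key1 (M a b)
    · linear_combination BC.key2 (M a b)
    · linear_combination -BC.key3 (M a b)
    · linear_combination BC.key4 (M a b)
  have h1 : R.charpoly = Q.charpoly := charpoly_eq_of_similar hRP hdet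
  refine ⟨h1, fun lam _ => ?_, fun lam _ => by rw [h1]⟩
  have hs : (R - lam • 1) * P = P * (Q - lam • 1) := by
    rw [sub_mul, mul_sub, hRP, Matrix.smul_mul lam (1 : Matrix _ _ BC) P, Matrix.one_mul,
      Matrix.mul_smul P lam (1 : Matrix _ _ BC), Matrix.mul_one]
  rw [det_eq_of_similar hs hdet]
end

section
/- Let N be a positive natural number and M an N×N matrix over the bicomplex numbers 𝔹ℂ. Let Q = [[0, M̄],[M, 0]] and R = [[Re^i(M), −Im^i(M)],[−Im^i(M), −Re^i(M)]], and let F = [[I, iI],[I, −iI]], all 2N×2N block matrices over 𝔹ℂ (I the N×N identity). If V is an invertible 2N×2N matrix over 𝔹ℂ and Λ is a diagonal 2N×2N matrix over 𝔹ℂ with R = V·Λ·V⁻¹, then F·V is invertible and Q = (F·V)·Λ·(F·V)⁻¹. -/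
open scoped TensorProduct

/-!
Over any commutative ring containing a square root `ι` of `-1` in which `2` is a unit, the
matrix `F = [[1, ι],[1, -ι]]` is invertible (its determinant is `(-2ι)ⁿ`) and intertwines
`[[P, -T],[-T, -P]]` with `[[0, P - ιT],[P + ιT, 0]]`. In `𝔹ℂ` every `b` splits as
`b = Re^i b + i Im^i b` and `b̄ = Re^i b - i Im^i b`, so `Q F = F R`, i.e. `Q = F R F⁻¹`,
and an eigendecomposition of `R` transports along `F` to one of `Q`.
-/

open Matrix

section BlockMatrices

variable {n S : Type*} [Fintype n] [DecidableEq n] [CommRing S]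

theorem isUnit_fromBlocks_one_smul_one_one_neg_smul_one {ι : S} (hι : ι * ι = -1)
    (h2 : IsUnit (2 : S)) :
    IsUnit (fromBlocks 1 (ι • 1) 1 (-(ι • 1)) : Matrix (n ⊕ n) (n ⊕ n) S) := by
  have hι_unit : IsUnit ι := IsUnit.of_mul_eq_one (-ι) (by rw [mul_neg, hι, neg_neg])
  have hschur : -(ι • 1) - 1 * (ι • 1) = (-(2 * ι)) • (1 : Matrix n n S) := by
    rw [Matrix.one_mul]
    module
  rw [isUnit_iff_isUnit_det, det_fromBlocks_one₁₁, hschur, det_smul, det_one, mul_one]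
  exact ((h2.mul hι_unit).neg).pow _

theorem fromBlocks_zero_sub_add_zero_mul_eq_mul_fromBlocks {ι : S} (hι : ι * ι = -1)
    (P T : Matrix n n S) :
    fromBlocks 0 (P - ι • T) (P + ι • T) 0 * fromBlocks 1 (ι • 1) 1 (-(ι • 1)) =
      fromBlocks 1 (ι • 1) 1 (-(ι • 1)) * fromBlocks P (-T) (-T) (-P) := by
  simp only [fromBlocks_multiply, Matrix.one_mul, Matrix.mul_one, zero_add, add_zero,
    Matrix.smul_mul, Matrix.mul_smul, Matrix.mul_neg, Matrix.neg_mul, smul_sub, smul_add,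
    smul_zero, smul_smul, hι, neg_one_smul]
  congr 1 <;> abel

theorem eq_mul_mul_inv_of_mul_eq_mul {Q F R V Λ : Matrix n n S} (hF : IsUnit F)
    (hQF : Q * F = F * R) (hRV : R = V * Λ * V⁻¹) : Q = F * V * Λ * (F * V)⁻¹ := by
  have hQ : Q = F * R * F⁻¹ := by
    rw [← hQF, Matrix.mul_assoc, mul_nonsing_inv F ((isUnit_iff_isUnit_det F).mp hF),
      Matrix.mul_one]
  rw [hQ, hRV, Matrix.mul_inv_rev]
  simp only [Matrix.mul_assoc]

end BlockMatrices

namespace BC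

theorem i_mul_i_s2 : i * i = -1 := by
  rw [i, Algebra.TensorProduct.tmul_mul_tmul, Complex.I_mul_I, one_mul, TensorProduct.neg_tmul,
    Algebra.TensorProduct.one_def]

theorem isUnit_two : IsUnit (2 : BC) := by
  have h := (isUnit_of_invertible (2 : ℝ)).map (algebraMap ℝ BC)
  rwa [map_ofNat] at h

theorem ReI_add_i_mul_ImI (b : BC) : ReI b + i * ImI b = b := by
  rw [ReI, ImI, mul_smul_comm, mul_left_comm, i_mul_i_s2, mul_neg_one (bar b - b)]
  module

theorem ReI_sub_i_mul_ImI (b : BC) : ReI b - i * ImI b = bar b := by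
  rw [ReI, ImI, mul_smul_comm, mul_left_comm, i_mul_i_s2, mul_neg_one (bar b - b)]
  module

end BC

theorem eigendecomposition_Q_of_R_general (N : ℕ) (M : Matrix (Fin N) (Fin N) BC)
    (Q R F : Matrix (Fin N ⊕ Fin N) (Fin N ⊕ Fin N) BC)
    (hQ : Q = Matrix.fromBlocks 0 (M.map BC.bar) M 0)
    (hR : R = Matrix.fromBlocks (M.map BC.ReI) (-(M.map BC.ImI))
      (-(M.map BC.ImI)) (-(M.map BC.ReI)))
    (hF : F = Matrix.fromBlocks 1 (BC.i • (1 : Matrix (Fin N) (Fin N) BC)) 1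
      (-(BC.i • (1 : Matrix (Fin N) (Fin N) BC))))
    (V Λ : Matrix (Fin N ⊕ Fin N) (Fin N ⊕ Fin N) BC)
    (hV : IsUnit V) (hRV : R = V * Λ * V⁻¹) :
    IsUnit (F * V) ∧ Q = (F * V) * Λ * (F * V)⁻¹ := by
  have hFu : IsUnit F :=
    hF ▸ isUnit_fromBlocks_one_smul_one_one_neg_smul_one BC.i_mul_i_s2 BC.isUnit_two
  have hQ' : Q = fromBlocks 0 (M.map BC.ReI - BC.i • M.map BC.ImI)
      (M.map BC.ReI + BC.i • M.map BC.ImI) 0 := by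
    rw [hQ]
    congr 1 <;> ext k l
    · exact (BC.ReI_sub_i_mul_ImI (M k l)).symm
    · exact (BC.ReI_add_i_mul_ImI (M k l)).symm
  have hQF : Q * F = F * R := by
    rw [hQ', hR, hF]
    exact fromBlocks_zero_sub_add_zero_mul_eq_mul_fromBlocks BC.i_mul_i_s2 _ _
  exact ⟨hFu.mul hV, eq_mul_mul_inv_of_mul_eq_mul hFu hQF hRV⟩

/-- With `Q = [[0, M̄],[M, 0]]`,
`R = [[Re^i(M), −Im^i(M)],[−Im^i(M), −Re^i(M)]]` and `F = [[I, iI],[I, −iI]]`: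
if `V` is invertible and `Λ` is diagonal with `R = V·Λ·V⁻¹`, then `F·V` is
invertible and `Q = (F·V)·Λ·(F·V)⁻¹`. -/
theorem eigendecomposition_Q_of_R (N : ℕ) (hN : 0 < N) (M : Matrix (Fin N) (Fin N) BC)
    (Q R F : Matrix (Fin N ⊕ Fin N) (Fin N ⊕ Fin N) BC)
    (hQ : Q = Matrix.fromBlocks 0 (M.map BC.bar) M 0)
    (hR : R = Matrix.fromBlocks (M.map BC.ReI) (-(M.map BC.ImI))
      (-(M.map BC.ImI)) (-(M.map BC.ReI)))
    (hF : F = Matrix.fromBlocks 1 (BC.i • (1 : Matrix (Fin N) (Fin N) BC)) 1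
      (-(BC.i • (1 : Matrix (Fin N) (Fin N) BC))))
    (V Λ : Matrix (Fin N ⊕ Fin N) (Fin N ⊕ Fin N) BC)
    (hV : IsUnit V) (hΛ : Λ.IsDiag) (hRV : R = V * Λ * V⁻¹) :
    IsUnit (F * V) ∧ Q = (F * V) * Λ * (F * V)⁻¹ :=
  eigendecomposition_Q_of_R_general N M Q R F hQ hR hF V Λ hV hRV
end

section
/- Let N be a positive natural number, M an N×N matrix over the bicomplex numbers 𝔹ℂ, and Q = [[0, M̄],[M, 0]] the 2N×2N block matrix. Then for every λ ∈ 𝔹ℂ: (1) det(Q − λ·I) = 0 if and only if det(Q + λ·I) = 0 (eigenvalues of Q come in pairs ±λ), and (2) det(Q − λ·I) = 0 if and only if det(λ²·I − M̄·M) = 0 (so λ² is an eigenvalue of M̄·M whenever λ is an eigenvalue of Q). -/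
open scoped TensorProduct

open Matrix Polynomial

section Key

variable {R : Type*} [CommRing R] {n : ℕ}

lemma key_unit (B C : Matrix (Fin n) (Fin n) R) (u : Rˣ) :
    (Matrix.fromBlocks (-((u : R) • 1)) B C (-((u : R) • 1))).det
      = (((u : R) ^ 2) • (1 : Matrix (Fin n) (Fin n) R) - B * C).det := by
  set l : R := (u : R) with hl
  set v : R := ((u⁻¹ : Rˣ) : R) with hv
  have hvl : v * l = 1 := Units.inv_mul u
  have hlv : l * v = 1 := Units.mul_inv u
  set A : Matrix (Fin n) (Fin n) R := -(l • 1) with hA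
  set T : Matrix (Fin n ⊕ Fin n) (Fin n ⊕ Fin n) R :=
    Matrix.fromBlocks 1 (v • B) 0 1 with hT
  have hTdet : T.det = 1 := by
    rw [hT, Matrix.det_fromBlocks_zero₂₁]; simp
  have hmul : T * Matrix.fromBlocks A B C A
      = Matrix.fromBlocks (A + v • (B * C)) 0 C A := by
    rw [hT, Matrix.fromBlocks_multiply]
    congr 1 <;>
      simp [hA, Matrix.smul_mul, Matrix.mul_neg, Matrix.mul_smul, smul_smul, hvl, hlv]
  have hdet : (Matrix.fromBlocks A B C A).det
      = (A + v • (B * C)).det * A.det := by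
    have := congrArg Matrix.det hmul
    rw [Matrix.det_mul, hTdet, one_mul] at this
    rw [this, Matrix.det_fromBlocks_zero₁₂]
  have h1 : A + v • (B * C) = v • (B * C - (l ^ 2) • 1) := by
    rw [smul_sub, smul_smul]
    have : v * l ^ 2 = l := by rw [pow_two, ← mul_assoc, hvl, one_mul]
    rw [this, hA]
    abel
  have h2 : A = (-l) • (1 : Matrix (Fin n) (Fin n) R) := by
    rw [hA, neg_smul]
  rw [hdet, h1, h2, Matrix.det_smul, Matrix.det_smul, Matrix.det_one, mul_one]
  rw [Fintype.card_fin]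
  calc v ^ n * (B * C - l ^ 2 • 1).det * (-l) ^ n
      = (v * -l) ^ n * (B * C - l ^ 2 • 1).det := by ring
    _ = (-1 : R) ^ n * (B * C - l ^ 2 • 1).det := by
        rw [show v * -l = -1 by rw [mul_neg, hvl]]
    _ = (-(B * C - l ^ 2 • 1)).det := by
        rw [Matrix.det_neg, Fintype.card_fin]
    _ = (l ^ 2 • 1 - B * C).det := by rw [neg_sub]

lemma mapNeg {S : Type*} [CommRing S] (f : R →+* S) (A : Matrix (Fin n) (Fin n) R) :
    (-A).map f = -(A.map f) := by
  ext i j; simp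

lemma mapSub {S : Type*} [CommRing S] (f : R →+* S) (A B : Matrix (Fin n) (Fin n) R) :
    (A - B).map f = A.map f - B.map f := by
  ext i j; simp

lemma mapMatrix_smul_one {S : Type*} [CommRing S] (f : R →+* S) (c : R) :
    (c • (1 : Matrix (Fin n) (Fin n) R)).map f = f c • (1 : Matrix (Fin n) (Fin n) S) := by
  ext i j
  by_cases h : i = j <;> simp [Matrix.one_apply, h]

lemma key_X (B C : Matrix (Fin n) (Fin n) (Polynomial R)) :
    (Matrix.fromBlocks (-((X : R[X]) • 1)) B C (-((X : R[X]) • 1))).det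
      = (((X : R[X]) ^ 2) • (1 : Matrix (Fin n) (Fin n) R[X]) - B * C).det := by
  set S := Localization.Away (Polynomial.X : R[X])
  set f : R[X] →+* S := algebraMap R[X] S with hf
  have hX : (Polynomial.X : R[X]) ∈ nonZeroDivisors R[X] :=
    Polynomial.monic_X.mem_nonZeroDivisors
  have hinj : Function.Injective f :=
    IsLocalization.injective S ((Submonoid.powers_le).mpr hX)
  apply hinj
  obtain ⟨u, hu⟩ := IsLocalization.Away.algebraMap_isUnit (S := S) (Polynomial.X : R[X])
  have hmap := key_unit (B.map f) (C.map f) u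
  rw [hu] at hmap
  rw [RingHom.map_det, RingHom.map_det]
  rw [RingHom.mapMatrix_apply, RingHom.mapMatrix_apply]
  rw [Matrix.fromBlocks_map]
  rw [show (-((X : R[X]) • (1 : Matrix (Fin n) (Fin n) R[X]))).map f
        = -(f X • (1 : Matrix (Fin n) (Fin n) S)) by
      rw [mapNeg, mapMatrix_smul_one]]
  rw [show (((X : R[X]) ^ 2) • (1 : Matrix (Fin n) (Fin n) R[X]) - B * C).map f
        = ((f X) ^ 2) • (1 : Matrix (Fin n) (Fin n) S) - (B.map f) * (C.map f) by
      rw [mapSub, mapMatrix_smul_one, map_pow, Matrix.map_mul]]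
  exact hmap

lemma key (B C : Matrix (Fin n) (Fin n) R) (lam : R) :
    (Matrix.fromBlocks (-(lam • 1)) B C (-(lam • 1))).det
      = ((lam ^ 2) • (1 : Matrix (Fin n) (Fin n) R) - B * C).det := by
  have h := key_X (B.map (Polynomial.C : R →+* R[X])) (C.map (Polynomial.C : R →+* R[X]))
  have h2 := congrArg (Polynomial.evalRingHom lam) h
  set g : R[X] →+* R := Polynomial.evalRingHom lam with hg
  rw [RingHom.map_det, RingHom.map_det, RingHom.mapMatrix_apply, RingHom.mapMatrix_apply,
    Matrix.fromBlocks_map] at h2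
  have hBC : ∀ (A : Matrix (Fin n) (Fin n) R), (A.map (Polynomial.C : R →+* R[X])).map g = A := by
    intro A; ext i j; simp [hg]
  have hl : (-((X : R[X]) • (1 : Matrix (Fin n) (Fin n) R[X]))).map g
      = -(lam • (1 : Matrix (Fin n) (Fin n) R)) := by
    rw [mapNeg, mapMatrix_smul_one]
    simp [hg]
  rw [hl, hBC, hBC] at h2
  rw [show (((X : R[X]) ^ 2) • (1 : Matrix (Fin n) (Fin n) R[X])
        - B.map (Polynomial.C : R →+* R[X]) * C.map (Polynomial.C : R →+* R[X])).map g
      = (lam ^ 2) • (1 : Matrix (Fin n) (Fin n) R) - B * C by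
    rw [mapSub, mapMatrix_smul_one, map_pow, Matrix.map_mul, hBC, hBC]
    simp [hg]] at h2
  exact h2

end Key

set_option maxHeartbeats 1000000 in
/-- For `Q = [[0, M̄],[M, 0]]` and every `λ ∈ 𝔹ℂ`:
(1) `det(Q − λI) = 0 ↔ det(Q + λI) = 0` (eigenvalues come in pairs `±λ`), and
(2) `det(Q − λI) = 0 ↔ det(λ²I − M̄M) = 0`. -/
theorem eigenvalues_Q_pairs_and_square (N : ℕ) (hN : 0 < N)
    (M : Matrix (Fin N) (Fin N) BC)
    (Q : Matrix (Fin N ⊕ Fin N) (Fin N ⊕ Fin N) BC)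
    (hQ : Q = Matrix.fromBlocks 0 (M.map BC.bar) M 0) :
    ∀ lam : BC,
      ((Q - lam • 1).det = 0 ↔ (Q + lam • 1).det = 0) ∧
      ((Q - lam • 1).det = 0 ↔ (lam ^ 2 • 1 - (M.map BC.bar) * M).det = 0) := by
  subst hQ
  intro lam
  set B := M.map BC.bar with hB
  have hm : Matrix.fromBlocks 0 B M 0 - lam • (1 : Matrix (Fin N ⊕ Fin N) (Fin N ⊕ Fin N) BC)
      = Matrix.fromBlocks (-(lam • 1)) B M (-(lam • 1)) := by
    rw [← Matrix.fromBlocks_one, Matrix.fromBlocks_smul, sub_eq_add_neg,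
      Matrix.fromBlocks_neg, Matrix.fromBlocks_add]
    simp only [zero_add, neg_zero, smul_zero, add_zero]
  have hp : Matrix.fromBlocks 0 B M 0 + lam • (1 : Matrix (Fin N ⊕ Fin N) (Fin N ⊕ Fin N) BC)
      = Matrix.fromBlocks (-((-lam) • 1)) B M (-((-lam) • 1)) := by
    rw [← Matrix.fromBlocks_one, Matrix.fromBlocks_smul, Matrix.fromBlocks_add]
    simp only [zero_add, smul_zero, add_zero, neg_smul, neg_neg]
  have dm : (Matrix.fromBlocks 0 B M 0
      - lam • (1 : Matrix (Fin N ⊕ Fin N) (Fin N ⊕ Fin N) BC)).det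
      = ((lam ^ 2) • (1 : Matrix (Fin N) (Fin N) BC) - B * M).det := by
    rw [hm, key]
  have dp : (Matrix.fromBlocks 0 B M 0
      + lam • (1 : Matrix (Fin N ⊕ Fin N) (Fin N ⊕ Fin N) BC)).det
      = ((lam ^ 2) • (1 : Matrix (Fin N) (Fin N) BC) - B * M).det := by
    rw [hp, key, show (-lam) ^ 2 = lam ^ 2 from by ring]
  constructor
  · rw [dm, dp]
  · rw [dm]
end

section
/- Let N be a positive natural number, M an N×N matrix over the bicomplex numbers 𝔹ℂ, and Q = [[0, M̄],[M, 0]] the 2N×2N block matrix. Then the characteristic polynomial of Q splits completely over ℂ(j): there exist λ₁, …, λ_{2N} ∈ ℂ(j) such that the characteristic polynomial of Q equals ∏_{k=1}^{2N} (X − λ_k). -/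
open scoped TensorProduct

/-!
The ℝ-algebra maps `fst (z ⊗ w) = z w` and `snd = fst ∘ bar` into `ℂ` identify `𝔹ℂ` with `ℂ × ℂ`,
agree on `ℂ(j)`, and are exchanged by bar-conjugation. Hence `Q` maps to `[[0, snd M], [fst M, 0]]`
under `fst` and to `[[0, fst M], [snd M, 0]]` under `snd`; these are conjugate by the block swap,
so both images of `charpoly Q` are one polynomial `p ∈ ℂ[X]`, i.e. `charpoly Q` has its coefficients
in `ℂ(j)`. Since `ℂ` is algebraically closed, `p` is a product of linear factors.
-/

namespace BC

noncomputable def fst : BC →ₐ[ℝ] ℂ := Algebra.TensorProduct.lmul' ℝ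

noncomputable def snd : BC →ₐ[ℝ] ℂ := fst.comp bar

@[simp] lemma fst_tmul (z w : ℂ) : fst (z ⊗ₜ w) = z * w :=
  Algebra.TensorProduct.lmul'_apply_tmul z w

@[simp] lemma snd_tmul (z w : ℂ) : snd (z ⊗ₜ w) = (starRingEnd ℂ) z * w := by
  simp [snd, bar]

@[simp] lemma bar_bar_s4 (x : BC) : bar (bar x) = x := by
  suffices bar.comp bar = AlgHom.id ℝ BC from congrArg (· x) this
  apply Algebra.TensorProduct.ext <;> ext <;> simp [bar]

lemma fst_bar (x : BC) : fst (bar x) = snd x := rfl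

lemma snd_bar (x : BC) : snd (bar x) = fst x := by
  rw [← fst_bar, bar_bar_s4]

lemma fst_prod_snd_surjective : Function.Surjective (fst.prod snd) := by
  rintro ⟨a, b⟩
  refine ⟨1 ⊗ₜ ((a + b) / 2) + Complex.I ⊗ₜ ((b - a) * Complex.I / 2), Prod.ext ?_ ?_⟩
  · simp only [AlgHom.prod_apply, map_add, Prod.fst_add, fst_tmul]
    linear_combination (b - a) / 2 * Complex.I_sq
  · simp only [AlgHom.prod_apply, map_add, Prod.snd_add, snd_tmul, map_one, Complex.conj_I]
    linear_combination (a - b) / 2 * Complex.I_sq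

lemma fst_prod_snd_injective : Function.Injective (fst.prod snd) := by
  have hdim : Module.finrank ℝ BC = Module.finrank ℝ (ℂ × ℂ) := by
    simp [Module.finrank_tensorProduct, Complex.finrank_real_complex]
  exact (LinearMap.injective_iff_surjective_of_finrank_eq_finrank
    (f := (fst.prod snd).toLinearMap) hdim).mpr fst_prod_snd_surjective

lemma ext_fst_snd {x y : BC} (h₁ : fst x = fst y) (h₂ : snd x = snd y) : x = y :=
  fst_prod_snd_injective (Prod.ext h₁ h₂)

open Polynomial in
lemma eq_map_includeRight_of_map_fst_of_map_snd {P : BC[X]} {p : ℂ[X]}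
    (h₁ : P.map fst.toRingHom = p) (h₂ : P.map snd.toRingHom = p) :
    P = p.map (Algebra.TensorProduct.includeRight : ℂ →ₐ[ℝ] BC).toRingHom := by
  ext n
  apply ext_fst_snd
  · simpa using congrArg (coeff · n) h₁
  · simpa using congrArg (coeff · n) h₂

end BC

lemma Matrix.charpoly_fromBlocks_zero_comm {n R : Type*} [DecidableEq n] [Fintype n] [CommRing R]
    (A B : Matrix n n R) :
    (fromBlocks 0 B A 0).charpoly = (fromBlocks 0 A B 0).charpoly := by
  rw [← charpoly_reindex (Equiv.sumComm n n), reindex_apply]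
  simp

lemma Multiset.exists_eq_univ_map_of_card_eq {α : Type*} {s : Multiset α} {n : ℕ}
    (hs : card s = n) : ∃ r : Fin n → α, s = Finset.univ.val.map r := by
  obtain ⟨l, rfl⟩ : ∃ l : List α, (l : Multiset α) = s := Quotient.exists_rep s
  rw [Multiset.coe_card] at hs
  subst hs
  exact ⟨l.get, by rw [Fin.univ_val_map, List.ofFn_get]⟩

open Polynomial in
lemma IsAlgClosed.exists_eq_prod_X_sub_C_of_monic {K : Type*} [Field K] [IsAlgClosed K]
    {p : K[X]} {n : ℕ} (hp : p.Monic) (hn : p.natDegree = n) :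
    ∃ r : Fin n → K, p = ∏ k, (X - C (r k)) := by
  have hsplit : p.Splits := IsAlgClosed.splits p
  obtain ⟨r, hr⟩ := Multiset.exists_eq_univ_map_of_card_eq
    ((splits_iff_card_roots.mp hsplit).trans hn)
  refine ⟨r, ?_⟩
  rw [hsplit.eq_prod_roots_of_monic hp, hr, Multiset.map_map]
  rfl

open Polynomial in
theorem charpoly_Q_splits_over_Cj_general (N : ℕ)
    (M : Matrix (Fin N) (Fin N) BC)
    (Q : Matrix (Fin N ⊕ Fin N) (Fin N ⊕ Fin N) BC)
    (hQ : Q = Matrix.fromBlocks 0 (M.map BC.bar) M 0) :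
    ∃ lam : Fin (2 * N) → BC, (∀ k, lam k ∈ BC.Cj) ∧
      Q.charpoly = ∏ k : Fin (2 * N), (X - C (lam k)) := by
  set ι := (Algebra.TensorProduct.includeRight : ℂ →ₐ[ℝ] BC).toRingHom
  set p := (Q.map BC.fst).charpoly
  have hsnd : (Q.map BC.snd).charpoly = p := by
    have h₁ : Q.map BC.fst = Matrix.fromBlocks 0 (M.map BC.snd) (M.map BC.fst) 0 := by
      simp [hQ, Matrix.fromBlocks_map, Matrix.map_map, Function.comp_def, BC.fst_bar]
    have h₂ : Q.map BC.snd = Matrix.fromBlocks 0 (M.map BC.fst) (M.map BC.snd) 0 := by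
      simp [hQ, Matrix.fromBlocks_map, Matrix.map_map, Function.comp_def, BC.snd_bar]
    rw [h₂, Matrix.charpoly_fromBlocks_zero_comm, ← h₁]
  have hQp : Q.charpoly = p.map ι := BC.eq_map_includeRight_of_map_fst_of_map_snd
    (Matrix.charpoly_map Q _).symm ((Matrix.charpoly_map Q _).symm.trans hsnd)
  obtain ⟨r, hr⟩ := IsAlgClosed.exists_eq_prod_X_sub_C_of_monic (p := p) (n := 2 * N)
    (Matrix.charpoly_monic _) (by simp [p, Matrix.charpoly_natDegree_eq_dim, two_mul])
  refine ⟨ι ∘ r, fun k => ⟨r k, rfl⟩, ?_⟩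
  simp [hQp, hr, Polynomial.map_prod]

open Polynomial in
/-- For `Q = [[0, M̄],[M, 0]]`, the characteristic polynomial of `Q`
splits completely over `ℂ(j)`: there are `λ₁, …, λ_{2N} ∈ ℂ(j)` with
`charpoly Q = ∏ (X − λ_k)`. -/
theorem charpoly_Q_splits_over_Cj (N : ℕ) (hN : 0 < N)
    (M : Matrix (Fin N) (Fin N) BC)
    (Q : Matrix (Fin N ⊕ Fin N) (Fin N ⊕ Fin N) BC)
    (hQ : Q = Matrix.fromBlocks 0 (M.map BC.bar) M 0) :
    ∃ lam : Fin (2 * N) → BC, (∀ k, lam k ∈ BC.Cj) ∧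
      Q.charpoly = ∏ k : Fin (2 * N), (X - C (lam k)) :=
  charpoly_Q_splits_over_Cj_general N M Q hQ
end

section
/- For all complex numbers A, B, C, the characteristic polynomial of the 4×4 complex matrix [[0, B, −A, −C],[B, 0, C, A],[−A, −C, 0, −B],[C, A, −B, 0]] equals ((X − B)² − (A² − C²))·((X + B)² − (A² − C²)). Consequently, for any complex square root s of A² − C², the eigenvalues of this matrix are exactly B + s, B − s, −B + s and −B − s. -/
open Polynomial

theorem Matrix.charpoly_vortex {R : Type*} [CommRing R] (a b c : R) :
    (!![0, b, -a, -c; b, 0, c, a; -a, -c, 0, -b; c, a, -b, 0] : Matrix (Fin 4) (Fin 4) R).charpoly =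
      ((X - C b) ^ 2 - C (a ^ 2 - c ^ 2)) * ((X + C b) ^ 2 - C (a ^ 2 - c ^ 2)) := by
  rw [Matrix.charpoly, Matrix.det_succ_row_zero]
  simp [Fin.sum_univ_succ, Matrix.det_fin_three, Matrix.charmatrix_apply, Fin.succAbove]
  ring

theorem Polynomial.isRoot_sub_C_sq_sub_C_sq {R : Type*} [CommRing R] [NoZeroDivisors R]
    (b s μ : R) : ((X - C b) ^ 2 - C (s ^ 2)).IsRoot μ ↔ μ = b + s ∨ μ = b - s := by
  simp only [IsRoot, eval_sub, eval_pow, eval_X, eval_C, sub_eq_zero,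
    sq_eq_sq_iff_eq_or_eq_neg]
  rw [sub_eq_iff_eq_add', sub_eq_iff_eq_add', ← sub_eq_add_neg]

/-- For complex `A`, `B`, `C₀`, the characteristic polynomial of
`[[0, B, −A, −C₀],[B, 0, C₀, A],[−A, −C₀, 0, −B],[C₀, A, −B, 0]]` equals
`((X − B)² − (A² − C₀²))·((X + B)² − (A² − C₀²))`; consequently, for any square root
`s` of `A² − C₀²`, the eigenvalues (roots of the characteristic polynomial) are
exactly `B + s`, `B − s`, `−B + s`, `−B − s`. -/
theorem charpoly_vortex_street (A B C₀ : ℂ)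
    (Mat : Matrix (Fin 4) (Fin 4) ℂ)
    (hMat : Mat = !![0, B, -A, -C₀; B, 0, C₀, A; -A, -C₀, 0, -B; C₀, A, -B, 0]) :
    Mat.charpoly =
      ((X - Polynomial.C B) ^ 2 - Polynomial.C (A ^ 2 - C₀ ^ 2)) *
        ((X + Polynomial.C B) ^ 2 - Polynomial.C (A ^ 2 - C₀ ^ 2)) ∧
    ∀ s : ℂ, s ^ 2 = A ^ 2 - C₀ ^ 2 →
      ∀ μ : ℂ, Mat.charpoly.IsRoot μ ↔
        (μ = B + s ∨ μ = B - s ∨ μ = -B + s ∨ μ = -B - s) := by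
  have hcp := hMat ▸ Matrix.charpoly_vortex A B C₀
  refine ⟨hcp, fun s hs μ => ?_⟩
  have hplus : (X + C B : ℂ[X]) = X - C (-B) := by rw [C_neg, sub_neg_eq_add]
  rw [hcp, ← hs, hplus, root_mul, isRoot_sub_C_sq_sub_C_sq, isRoot_sub_C_sq_sub_C_sq, or_assoc]
end
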